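/- For p, q ≥ 1 the full twist satisfies the decomposition ∇_{p+q} = ∇_{1,p} ∇_{p+1,p+q} · (σ_p σ_{p+1} ⋯ σ_{p+q−1})(σ_{p−1} σ_p ⋯ σ_{p+q−2}) ⋯ (σ_1 σ_2 ⋯ σ_q) · (σ_q σ_{q+1} ⋯ σ_{q+p−1})(σ_{q−1} σ_q ⋯ σ_{q+p−2}) ⋯ (σ_1 σ_2 ⋯ σ_p) in B_{p+q}. -/

import Mathlib

/-- The braid relations on generators indexed by `Fin m` (generator `i`
represents the standard generator `σ_{i+1}` of the braid group `B_{m+1}`). -/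
def braidRels (m : ℕ) : Set (FreeGroup (Fin m)) :=
  { r | (∃ i j : Fin m, (i : ℕ) + 1 < (j : ℕ) ∧
          r = FreeGroup.of i * FreeGroup.of j * (FreeGroup.of i)⁻¹ * (FreeGroup.of j)⁻¹) ∨
        (∃ i j : Fin m, (i : ℕ) + 1 = (j : ℕ) ∧
          r = FreeGroup.of i * FreeGroup.of j * FreeGroup.of i *
              (FreeGroup.of j)⁻¹ * (FreeGroup.of i)⁻¹ * (FreeGroup.of j)⁻¹) }

/-- The braid group `B_n`, presented with `n-1` standard generators. -/
abbrev BraidGroup (n : ℕ) := PresentedGroup (braidRels (n - 1))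

/-- The standard generator `σ_{i+1}` (0-based index `i`). -/
def σ {n : ℕ} (i : Fin (n - 1)) : BraidGroup n := PresentedGroup.of i

/-- A positive band in `B_n`: any conjugate of a standard generator. -/
def PositiveBand {n : ℕ} (b : BraidGroup n) : Prop := ∃ i : Fin (n - 1), IsConj (σ i) b

/-- The monoid of quasipositive braids in `B_n`. -/
def Qp (n : ℕ) : Submonoid (BraidGroup n) := Submonoid.closure {b | PositiveBand b}
/-- The standard generator `σ_{k+1}` of `B_n` (0-based index `k`), as a total
function (out-of-range indices map to the identity). -/
def gen (n : ℕ) (k : ℕ) : BraidGroup n :=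
  if h : k < n - 1 then σ ⟨k, h⟩ else 1

/-- The word `(σ_{i+1} ⋯ σ_{i+len})(σ_{i+1} ⋯ σ_{i+len−1}) ⋯ σ_{i+1}` in `B_n`,
built from the `len` consecutive generators with 0-based indices
`off, off+1, …, off+len−1`. -/
def halfTwist (n off len : ℕ) : BraidGroup n :=
  (((List.range len).reverse.map
      (fun k => (List.range (k + 1)).map (fun t => gen n (off + t)))).flatten).prod

/-- `∇_{i,j} = ι_{i,j}(∇_{j−i+1})`: the full twist on strings `i, …, j` of `B_n`,
using generators `σ_i, …, σ_{j−1}` (0-based indices `i−1, …, j−2`). -/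
def fullTwistOn (n off len : ℕ) : BraidGroup n := halfTwist n off len * halfTwist n off len

/-!
The identity already holds in any monoid generated by elements `g 0, g 1, …` satisfying the
braid relations. Let `Δ` be the half twist on all `p + q` strands, `A` and `B` the half twists on
the first `p` and on the last `q` strands, and `X`, `Y` the two grid words of the statement, so
that `∇_{p+q} = Δ²`, `∇_{1,p} = A²`, `∇_{p+1,p+q} = B²`.

First, `Δ = A B X`, by induction on `p` from `Δ_{m+1} = Δ'_m (σ_1 ⋯ σ_m)`, where `Δ'_m` lives on
the strands shifted by one. Second, conjugation by `Δ` reverses the generators,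
`σ_i ↦ σ_{p+q-i}`; it turns `X`, read row by row, into the same grid of crossings read column by
column, which is `Y`: `X Δ = Δ Y`. Hence `Δ² = A B X Δ = A B Δ Y = A B A B X Y = A² B² X Y`,
since `A` and `B` use disjoint, non-adjacent generators.
-/

variable {M : Type*} [Monoid M]

/-- `g k` plays the role of `σ_{k+1}`. Far commutation is required for all indices, the braid
relation only below `N`, as for `gen n` (which is `1` out of range) with `N = n - 1`. -/
structure IsBraidFamily (g : ℕ → M) (N : ℕ) : Prop where
  commute : ∀ j k, j + 2 ≤ k → Commute (g j) (g k)
  braid : ∀ k, k + 1 < N → g k * g (k + 1) * g k = g (k + 1) * g k * g (k + 1)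

theorem isBraidFamily_gen (n : ℕ) : IsBraidFamily (gen n) (n - 1) where
  commute j k hjk := by
    unfold gen
    split_ifs with hj hk
    · exact PresentedGroup.mk_eq_mk_of_mul_inv_mem (by
        rw [mul_inv_rev, ← mul_assoc]
        exact Or.inl ⟨⟨j, hj⟩, ⟨k, hk⟩, hjk, rfl⟩)
    all_goals simp
  braid k hk := by
    simp only [gen, dif_pos hk, dif_pos (show k < n - 1 by omega)]
    exact PresentedGroup.mk_eq_mk_of_mul_inv_mem (by
      simp only [mul_inv_rev, ← mul_assoc]
      exact Or.inr ⟨_, _, rfl, rfl⟩)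

section Words

variable (g : ℕ → M)

def ascWord (i : ℕ) : ℕ → M
  | 0 => 1
  | m + 1 => ascWord i m * g (i + m)

def descWord (i : ℕ) : ℕ → M
  | 0 => 1
  | m + 1 => g (i + m) * descWord i m

/-- Garside's half twist `Δ` on the strands `i + 1, …, i + m + 1`. -/
def deltaWord (i : ℕ) : ℕ → M
  | 0 => 1
  | m + 1 => ascWord g i (m + 1) * deltaWord i m

/-- `gridWord g 0 q p` is the word `(σ_p ⋯ σ_{p+q−1}) ⋯ (σ_1 ⋯ σ_q)` of the statement. -/
def gridWord (i t : ℕ) : ℕ → M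
  | 0 => 1
  | s + 1 => ascWord g (i + s) t * gridWord i t s

def descGridWord : ℕ → ℕ → ℕ → M
  | _, _, 0 => 1
  | i, t, s + 1 => descWord g i t * descGridWord (i + 1) t s

theorem ascWord_add (i a b : ℕ) : ascWord g i (a + b) = ascWord g i a * ascWord g (i + a) b := by
  induction b with
  | zero => simp [ascWord]
  | succ b ih => rw [← Nat.add_assoc, ascWord, ih, ascWord, mul_assoc, Nat.add_assoc]

theorem descWord_add (i a b : ℕ) :
    descWord g i (a + b) = descWord g (i + a) b * descWord g i a := by
  induction b with
  | zero => simp [descWord]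
  | succ b ih => rw [← Nat.add_assoc, descWord, ih, descWord, mul_assoc, Nat.add_assoc]

theorem descWord_succ' (i m : ℕ) : descWord g i (m + 1) = descWord g (i + 1) m * g i := by
  rw [Nat.add_comm, descWord_add]
  simp [descWord]

theorem gridWord_succ' (i t s : ℕ) :
    gridWord g i t (s + 1) = gridWord g (i + 1) t s * ascWord g i t := by
  induction s with
  | zero => simp [gridWord]
  | succ s ih => rw [gridWord, ih, gridWord, mul_assoc, Nat.add_right_comm, ← Nat.add_assoc]

theorem gridWord_zero_cols (i s : ℕ) : gridWord g i 0 s = 1 := by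
  induction s with
  | zero => rfl
  | succ s ih => simp [gridWord, ascWord, ih]

theorem descGridWord_succ' (i t s : ℕ) :
    descGridWord g i t (s + 1) = descGridWord g i t s * descWord g (i + s) t := by
  induction s generalizing i with
  | zero => simp [descGridWord]
  | succ s ih => rw [descGridWord, ih, descGridWord, mul_assoc, Nat.add_right_comm, Nat.add_assoc]

variable {g}

theorem ascWord_commute {x : M} {i m : ℕ} (h : ∀ k, i ≤ k → k < i + m → Commute (g k) x) :
    Commute (ascWord g i m) x := by
  induction m with
  | zero => exact Commute.one_left x
  | succ m ih => exact (ih fun k hk hkm => h k hk (by omega)).mul_left (h _ (by omega) (by omega))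

theorem descWord_commute {x : M} {i m : ℕ} (h : ∀ k, i ≤ k → k < i + m → Commute (g k) x) :
    Commute (descWord g i m) x := by
  induction m with
  | zero => exact Commute.one_left x
  | succ m ih => exact (h _ (by omega) (by omega)).mul_left (ih fun k hk hkm => h k hk (by omega))

theorem deltaWord_commute {x : M} {i m : ℕ} (h : ∀ k, i ≤ k → k < i + m → Commute (g k) x) :
    Commute (deltaWord g i m) x := by
  induction m with
  | zero => exact Commute.one_left x
  | succ m ih =>
    exact (ascWord_commute h).mul_left (ih fun k hk hkm => h k hk (by omega))

theorem gridWord_commute {x : M} {i t s : ℕ}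
    (h : ∀ k, i ≤ k → k + 1 < i + s + t → Commute (g k) x) : Commute (gridWord g i t s) x := by
  induction s with
  | zero => exact Commute.one_left x
  | succ s ih =>
    exact (ascWord_commute fun k hk hkt => h k (by omega) (by omega)).mul_left
      (ih fun k hk hkt => h k hk (by omega))

theorem semiconjBy_ascWord_shift {a : M} {j r : ℕ}
    (h : ∀ k, j ≤ k → k < j + r → SemiconjBy a (g k) (g (k + 1))) :
    SemiconjBy a (ascWord g j r) (ascWord g (j + 1) r) := by
  induction r with
  | zero => exact SemiconjBy.one_right a
  | succ r ih =>
    rw [ascWord, ascWord, Nat.add_right_comm]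
    exact (ih fun k hk hkr => h k hk (by omega)).mul_right (h _ (by omega) (by omega))

theorem semiconjBy_descWord_shift {a : M} {j r : ℕ}
    (h : ∀ k, j ≤ k → k < j + r → SemiconjBy a (g k) (g (k + 1))) :
    SemiconjBy a (descWord g j r) (descWord g (j + 1) r) := by
  induction r with
  | zero => exact SemiconjBy.one_right a
  | succ r ih =>
    rw [descWord, descWord, Nat.add_right_comm]
    exact (h _ (by omega) (by omega)).mul_right (ih fun k hk hkr => h k hk (by omega))

theorem semiconjBy_deltaWord_shift {a : M} {j r : ℕ}
    (h : ∀ k, j ≤ k → k < j + r → SemiconjBy a (g k) (g (k + 1))) :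
    SemiconjBy a (deltaWord g j r) (deltaWord g (j + 1) r) := by
  induction r with
  | zero => exact SemiconjBy.one_right a
  | succ r ih =>
    exact (semiconjBy_ascWord_shift h).mul_right (ih fun k hk hkr => h k hk (by omega))

end Words

namespace IsBraidFamily

variable {g : ℕ → M} {N : ℕ}

theorem commute_of_far (hg : IsBraidFamily g N) {j k : ℕ} (h : j + 2 ≤ k ∨ k + 2 ≤ j) :
    Commute (g j) (g k) :=
  h.elim (hg.commute j k) fun h => (hg.commute k j h).symm

theorem semiconjBy_ascWord_gen (hg : IsBraidFamily g N) {i j m : ℕ} (hij : i ≤ j)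
    (hjm : j + 2 ≤ i + m) (hm : i + m ≤ N) : SemiconjBy (ascWord g i m) (g j) (g (j + 1)) := by
  obtain ⟨a, rfl⟩ := Nat.exists_eq_add_of_le hij
  obtain ⟨b, rfl⟩ : ∃ b, m = a + 2 + b := ⟨m - (a + 2), by omega⟩
  have hbraid : SemiconjBy (ascWord g (i + a) 2) (g (i + a)) (g (i + a + 1)) := by
    simpa [SemiconjBy, ascWord, mul_assoc] using hg.braid (i + a) (by omega)
  rw [ascWord_add, ascWord_add]
  refine (SemiconjBy.mul_left ?_ hbraid).mul_left ?_
  · exact ascWord_commute fun k hk hka => hg.commute_of_far (Or.inl (by omega))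
  · exact ascWord_commute fun k hk hkb => hg.commute_of_far (Or.inr (by omega))

theorem semiconjBy_descWord_gen (hg : IsBraidFamily g N) {i j m : ℕ} (hij : i ≤ j)
    (hjm : j + 2 ≤ i + m) (hm : i + m ≤ N) : SemiconjBy (descWord g i m) (g (j + 1)) (g j) := by
  obtain ⟨a, rfl⟩ := Nat.exists_eq_add_of_le hij
  obtain ⟨b, rfl⟩ : ∃ b, m = a + 2 + b := ⟨m - (a + 2), by omega⟩
  have hbraid : SemiconjBy (descWord g (i + a) 2) (g (i + a + 1)) (g (i + a)) := by
    simpa [SemiconjBy, descWord, mul_assoc] using (hg.braid (i + a) (by omega)).symm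
  rw [descWord_add, descWord_add]
  refine SemiconjBy.mul_left ?_ (hbraid.mul_left ?_)
  · exact descWord_commute fun k hk hkb => hg.commute_of_far (Or.inr (by omega))
  · exact descWord_commute fun k hk hka => hg.commute_of_far (Or.inl (by omega))

theorem deltaWord_succ_eq_mul_descWord (hg : IsBraidFamily g N) (i m : ℕ) :
    deltaWord g i (m + 1) = deltaWord g i m * descWord g i (m + 1) := by
  induction m with
  | zero => simp [deltaWord, ascWord, descWord]
  | succ m ih =>
    have hc : Commute (g (i + (m + 1))) (deltaWord g i m) :=
      (deltaWord_commute fun k hk hkm => hg.commute_of_far (Or.inl (by omega))).symm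
    calc deltaWord g i (m + 2)
        = ascWord g i (m + 1) * g (i + (m + 1)) * (deltaWord g i m * descWord g i (m + 1)) := by
          rw [deltaWord, ih, ascWord]
      _ = ascWord g i (m + 1) * deltaWord g i m * (g (i + (m + 1)) * descWord g i (m + 1)) := by
          simp only [mul_assoc, hc.left_comm]
      _ = deltaWord g i (m + 1) * descWord g i (m + 2) := rfl

theorem semiconjBy_deltaWord_gen (hg : IsBraidFamily g N) {o : ℕ} :
    ∀ {m i j : ℕ}, i + j + 1 = m → o + m ≤ N →
      SemiconjBy (deltaWord g o m) (g (o + i)) (g (o + j))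
  | 0, _, _, h, _ => by omega
  | m + 1, i, j + 1, h, hm =>
    (hg.semiconjBy_ascWord_gen (j := o + j) (by omega) (by omega) hm).mul_left
      (hg.semiconjBy_deltaWord_gen (i := i) (j := j) (by omega) (by omega))
  | 1, 0, 0, _, _ => by
    simp only [deltaWord, ascWord, one_mul, mul_one, Nat.add_zero]
    exact Commute.refl (g o)
  | m + 2, i, 0, h, hm => by
    obtain rfl : i = m + 1 := by omega
    rw [hg.deltaWord_succ_eq_mul_descWord]
    exact (hg.semiconjBy_deltaWord_gen (i := m) (by omega) (by omega)).mul_left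
      (hg.semiconjBy_descWord_gen (j := o + m) (by omega) (by omega) hm)

theorem semiconjBy_deltaWord_descWord (hg : IsBraidFamily g N) {o n i c m : ℕ} (hn : o + n ≤ N)
    (h : i + m + c = n) :
    SemiconjBy (deltaWord g o n) (descWord g (o + c) m) (ascWord g (o + i) m) := by
  induction m generalizing c with
  | zero => exact SemiconjBy.one_right _
  | succ m ih =>
    rw [descWord_succ', ascWord, Nat.add_assoc o i m]
    exact (ih (c := c + 1) (by omega)).mul_right
      (hg.semiconjBy_deltaWord_gen (i := c) (j := i + m) (by omega) hn)

theorem semiconjBy_deltaWord_descGridWord (hg : IsBraidFamily g N) {o n t s c : ℕ}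
    (hn : o + n ≤ N) (h : c + s + t = n + 1) :
    SemiconjBy (deltaWord g o n) (descGridWord g (o + c) t s) (gridWord g o t s) := by
  induction s generalizing c with
  | zero => exact SemiconjBy.one_right _
  | succ s ih =>
    rw [descGridWord, gridWord]
    exact (hg.semiconjBy_deltaWord_descWord hn (by omega)).mul_right (ih (c := c + 1) (by omega))

theorem gridWord_succ_cols (hg : IsBraidFamily g N) (i t s : ℕ) :
    gridWord g i (t + 1) s = gridWord g i t s * descWord g (i + t) s := by
  induction s with
  | zero => simp [gridWord, descWord]
  | succ s ih =>
    have hc : Commute (g (i + s + t)) (gridWord g i t s) :=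
      (gridWord_commute fun k hk hkst => hg.commute_of_far (Or.inl (by omega))).symm
    rw [gridWord, ih, ascWord, gridWord, descWord, Nat.add_right_comm i t s]
    simp only [mul_assoc, hc.left_comm]

theorem descGridWord_eq_gridWord (hg : IsBraidFamily g N) (i t s : ℕ) :
    descGridWord g i t s = gridWord g i s t := by
  induction s with
  | zero => simp [descGridWord, gridWord_zero_cols]
  | succ s ih => rw [descGridWord_succ', ih, hg.gridWord_succ_cols]

theorem deltaWord_succ_eq_deltaWord_mul_ascWord (hg : IsBraidFamily g N) {i m : ℕ}
    (hm : i + m + 1 ≤ N) : deltaWord g i (m + 1) = deltaWord g (i + 1) m * ascWord g i (m + 1) := by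
  induction m with
  | zero => simp [deltaWord]
  | succ m ih =>
    have hδ : SemiconjBy (ascWord g i (m + 2)) (deltaWord g (i + 1) m) (deltaWord g (i + 2) m) :=
      semiconjBy_deltaWord_shift fun k hk hkm =>
        hg.semiconjBy_ascWord_gen (by omega) (by omega) (by omega)
    have hα : SemiconjBy (ascWord g i (m + 2)) (ascWord g i (m + 1)) (ascWord g (i + 1) (m + 1)) :=
      semiconjBy_ascWord_shift fun k hk hkm =>
        hg.semiconjBy_ascWord_gen (by omega) (by omega) (by omega)
    have hδ' : SemiconjBy (ascWord g (i + 1) (m + 1)) (deltaWord g (i + 1) m)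
        (deltaWord g (i + 2) m) :=
      semiconjBy_deltaWord_shift fun k hk hkm =>
        hg.semiconjBy_ascWord_gen (by omega) (by omega) (by omega)
    calc deltaWord g i (m + 2)
        = ascWord g i (m + 2) * deltaWord g (i + 1) m * ascWord g i (m + 1) := by
          rw [deltaWord, ih (by omega), mul_assoc]
      _ = deltaWord g (i + 2) m * ascWord g (i + 1) (m + 1) * ascWord g i (m + 2) := by
          rw [hδ.eq, mul_assoc, hα.eq, mul_assoc]
      _ = deltaWord g (i + 1) (m + 1) * ascWord g i (m + 2) := by
          rw [← hδ'.eq, deltaWord]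

theorem ascWord_mul_descWord (hg : IsBraidFamily g N) {i t s : ℕ} (h : i + t + s + 1 ≤ N) :
    ascWord g i (s + t) * descWord g (i + t) (s + 1) =
      descWord g (i + t + 1) s * ascWord g i (s + t + 1) := by
  have hshift : SemiconjBy (ascWord g i (s + t + 1)) (descWord g (i + t) s)
      (descWord g (i + t + 1) s) :=
    semiconjBy_descWord_shift fun k hk hks =>
      hg.semiconjBy_ascWord_gen (by omega) (by omega) (by omega)
  have hα : ascWord g i (s + t) * g (i + t + s) = ascWord g i (s + t + 1) := by
    rw [ascWord, Nat.add_comm s t, Nat.add_assoc]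
  rw [descWord, ← mul_assoc, hα, hshift.eq]

theorem ascWord_mul_gridWord_mul_ascWord (hg : IsBraidFamily g N) {i s t : ℕ}
    (h : i + s + t ≤ N) :
    ascWord g i s * gridWord g (i + 1) t s * ascWord g i t =
      gridWord g (i + 1) t s * ascWord g i (s + t) := by
  induction t with
  | zero => simp [gridWord_zero_cols, ascWord]
  | succ t ih =>
    have hc : Commute (descWord g (i + t + 1) s) (ascWord g i t) :=
      descWord_commute fun k hk hks =>
        (ascWord_commute fun l hl hlt => hg.commute_of_far (Or.inl (by omega))).symm
    rw [hg.gridWord_succ_cols, Nat.add_right_comm i 1 t]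
    calc ascWord g i s * (gridWord g (i + 1) t s * descWord g (i + t + 1) s) * ascWord g i (t + 1)
        = ascWord g i s * gridWord g (i + 1) t s * ascWord g i t *
            (descWord g (i + t + 1) s * g (i + t)) := by
          rw [ascWord]
          simp only [mul_assoc, hc.left_comm]
      _ = gridWord g (i + 1) t s * (ascWord g i (s + t) * descWord g (i + t) (s + 1)) := by
          rw [ih (by omega), descWord_succ']
          simp only [mul_assoc]
      _ = gridWord g (i + 1) t s * descWord g (i + t + 1) s * ascWord g i (s + (t + 1)) := by
          rw [hg.ascWord_mul_descWord (by omega), mul_assoc]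
          rfl

theorem deltaWord_add_add_one (hg : IsBraidFamily g N) {i u v : ℕ} (h : i + u + v + 1 ≤ N) :
    deltaWord g i (u + v + 1) =
      deltaWord g i u * deltaWord g (i + u + 1) v * gridWord g i (v + 1) (u + 1) := by
  induction u generalizing i with
  | zero =>
    rw [Nat.zero_add, hg.deltaWord_succ_eq_deltaWord_mul_ascWord (by omega)]
    simp [deltaWord, gridWord]
  | succ u ih =>
    have hc : Commute (ascWord g i (u + 1)) (deltaWord g (i + u + 2) v) :=
      ascWord_commute fun k hk hku =>
        (deltaWord_commute fun l hl hlv => hg.commute_of_far (Or.inr (by omega))).symm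
    calc deltaWord g i (u + 1 + v + 1)
        = deltaWord g (i + 1) (u + v + 1) * ascWord g i (u + v + 1 + 1) := by
          rw [Nat.add_right_comm u 1 v, hg.deltaWord_succ_eq_deltaWord_mul_ascWord (by omega)]
      _ = deltaWord g (i + 1) u * deltaWord g (i + u + 2) v *
            (gridWord g (i + 1) (v + 1) (u + 1) * ascWord g i (u + 1 + (v + 1))) := by
          rw [ih (by omega), show u + v + 1 + 1 = u + 1 + (v + 1) by omega,
            show i + 1 + u + 1 = i + u + 2 by omega]
          simp only [mul_assoc]
      _ = deltaWord g (i + 1) u * deltaWord g (i + u + 2) v *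
            (ascWord g i (u + 1) * gridWord g (i + 1) (v + 1) (u + 1) * ascWord g i (v + 1)) := by
          rw [hg.ascWord_mul_gridWord_mul_ascWord (by omega)]
      _ = deltaWord g i (u + 1) * deltaWord g (i + (u + 1) + 1) v *
            gridWord g i (v + 1) (u + 1 + 1) := by
          rw [hg.deltaWord_succ_eq_deltaWord_mul_ascWord (i := i) (m := u) (by omega),
            gridWord_succ' g i (v + 1) (u + 1),
            show i + (u + 1) + 1 = i + u + 2 by omega]
          simp only [mul_assoc, hc.left_comm]

theorem deltaWord_mul_deltaWord (hg : IsBraidFamily g N) {i u v : ℕ} (h : i + u + v + 1 ≤ N) :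
    deltaWord g i (u + v + 1) * deltaWord g i (u + v + 1) =
      deltaWord g i u * deltaWord g i u *
        (deltaWord g (i + u + 1) v * deltaWord g (i + u + 1) v) *
        gridWord g i (v + 1) (u + 1) * gridWord g i (u + 1) (v + 1) := by
  set Δ := deltaWord g i (u + v + 1)
  set A := deltaWord g i u
  set B := deltaWord g (i + u + 1) v
  have hdecomp : Δ = A * B * gridWord g i (v + 1) (u + 1) := hg.deltaWord_add_add_one h
  have hflip : SemiconjBy Δ (gridWord g i (u + 1) (v + 1)) (gridWord g i (v + 1) (u + 1)) := by
    simpa [hg.descGridWord_eq_gridWord] using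
      hg.semiconjBy_deltaWord_descGridWord (c := 0) (by omega) (by omega)
  have hAB : Commute A B :=
    deltaWord_commute fun k hk hku =>
      (deltaWord_commute fun l hl hlv => hg.commute_of_far (Or.inr (by omega))).symm
  calc Δ * Δ = A * B * (gridWord g i (v + 1) (u + 1) * Δ) := by
        nth_rw 1 [hdecomp]
        rw [mul_assoc]
    _ = _ := by
        rw [← hflip.eq, hdecomp]
        simp only [mul_assoc, hAB.symm.left_comm]

end IsBraidFamily

theorem prod_map_range_eq_ascWord (g : ℕ → M) (i m : ℕ) :
    ((List.range m).map fun t => g (i + t)).prod = ascWord g i m := by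
  induction m with
  | zero => rfl
  | succ m ih => rw [List.range_succ, List.map_append, List.prod_append, ih]; simp [ascWord]

theorem prod_map_range_ascWord_eq_gridWord (g : ℕ → M) (t s : ℕ) :
    ((List.range s).map fun a => ascWord g (s - 1 - a) t).prod = gridWord g 0 t s := by
  induction s with
  | zero => rfl
  | succ s ih =>
    rw [List.range_succ_eq_map, List.map_cons, List.prod_cons, List.map_map, gridWord, ← ih]
    congr 2
    · omega
    · exact List.map_congr_left fun a _ => congrArg (ascWord g · t) (by omega)

theorem halfTwist_eq_deltaWord (n off len : ℕ) :
    halfTwist n off len = deltaWord (gen n) off len := by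
  induction len with
  | zero => rfl
  | succ len ih =>
    rw [halfTwist] at ih ⊢
    rw [List.range_succ, List.reverse_append, List.map_append, List.flatten_append,
      List.prod_append, ih, deltaWord]
    simp [prod_map_range_eq_ascWord]

/-- For `p, q ≥ 1`, in `B_{p+q}`:
`∇_{p+q} = ∇_{1,p} ∇_{p+1,p+q} ·
(σ_p ⋯ σ_{p+q−1})(σ_{p−1} ⋯ σ_{p+q−2}) ⋯ (σ_1 ⋯ σ_q) ·
(σ_q ⋯ σ_{q+p−1})(σ_{q−1} ⋯ σ_{q+p−2}) ⋯ (σ_1 ⋯ σ_p)`. -/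
theorem stmt_5 (p q : ℕ) (hp : 1 ≤ p) (hq : 1 ≤ q) :
    fullTwistOn (p + q) 0 (p + q - 1) =
      fullTwistOn (p + q) 0 (p - 1) * fullTwistOn (p + q) p (q - 1) *
      ((List.range p).map
        (fun a => ((List.range q).map (fun t => gen (p + q) (p - 1 - a + t))).prod)).prod *
      ((List.range q).map
        (fun b => ((List.range p).map (fun t => gen (p + q) (q - 1 - b + t))).prod)).prod := by
  obtain ⟨u, rfl⟩ : ∃ u, p = u + 1 := ⟨p - 1, by omega⟩
  obtain ⟨v, rfl⟩ : ∃ v, q = v + 1 := ⟨q - 1, by omega⟩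
  simp only [fullTwistOn, halfTwist_eq_deltaWord, prod_map_range_eq_ascWord]
  rw [prod_map_range_ascWord_eq_gridWord, prod_map_range_ascWord_eq_gridWord,
    show deltaWord (gen _) 0 (u + 1 + (v + 1) - 1) = deltaWord (gen _) 0 (u + v + 1) from
      congrArg _ (by omega), Nat.add_sub_cancel, Nat.add_sub_cancel]
  simpa only [Nat.zero_add] using
    (isBraidFamily_gen (u + 1 + (v + 1))).deltaWord_mul_deltaWord (i := 0) (u := u) (v := v)
      (by omega)
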